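/- Let e be the potential event consisting of consecutive blocks, for n = 0, 1, 2, …, of 2ⁿ ones followed by 2ⁿ zeros; explicitly, e(i) = 1 if and only if there exists n ≥ 0 with 2^{n+1} − 1 ≤ i ≤ 2^{n+1} − 2 + 2ⁿ. Then there is no strictly increasing γ : ℕ⁺ → ℕ⁺ such that (e, γ) is an actual event; equivalently, the frequency sequence Φ(e) does not converge. -/

import Mathlib

/-- A potential event: a sequence of `0`s and `1`s indexed by positive naturals
(the value at `0` is irrelevant). -/
def IsPotential (e : ℕ → ℕ) : Prop := ∀ n, 1 ≤ n → e n ≤ 1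

/-- The frequency (rate of success) `Φ(e)(n) = (∑_{i=1}^n e(i)) / n`. -/
def freq (e : ℕ → ℕ) (n : ℕ) : ℚ := (∑ i ∈ Finset.Icc 1 n, (e i : ℚ)) / (n : ℚ)

/-- `(e, γ)` is an actual event: `γ : ℕ⁺ → ℕ⁺` is strictly increasing and
`|Φ(e)(γ(n)+i) − Φ(e)(γ(n)+j)| ≤ 1/n` for all `n ∈ ℕ⁺`, `i j ∈ ℕ`. -/
def IsActual (e : ℕ → ℕ) (γ : ℕ → ℕ) : Prop :=
  (∀ n, 1 ≤ n → 1 ≤ γ n) ∧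
  (∀ m n, 1 ≤ m → m < n → γ m < γ n) ∧
  (∀ n, 1 ≤ n → ∀ i j : ℕ, |freq e (γ n + i) - freq e (γ n + j)| ≤ 1 / (n : ℚ))


/-!
Block `k` of the event consists of `2 ^ k` ones followed by `2 ^ k` zeros and starts after
position `2 ^ (k + 1) - 2`, where exactly half of the positions so far were ones. At the end of
the ones of block `k` the frequency has therefore risen to `(2 ^ (k + 1) - 1) / (3 * 2 ^ k - 2)`,
which is at least `2 / 3`, and at the end of the block it is back to `1 / 2`. So the frequency
oscillates by at least `1 / 6` arbitrarily far out, whereas an actual event forces the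
oscillation beyond `γ 7` to be at most `1 / 7`.
-/

open Finset

theorem IsActual.abs_freq_sub_le {e γ : ℕ → ℕ} (h : IsActual e γ) {n a b : ℕ} (hn : 1 ≤ n)
    (ha : γ n ≤ a) (hb : γ n ≤ b) : |freq e a - freq e b| ≤ 1 / (n : ℚ) := by
  obtain ⟨i, rfl⟩ := Nat.exists_eq_add_of_le ha
  obtain ⟨j, rfl⟩ := Nat.exists_eq_add_of_le hb
  exact h.2.2 n hn i j

theorem freq_eq_sum_Ioc (e : ℕ → ℕ) (n : ℕ) :
    freq e n = ((∑ i ∈ Ioc 0 n, e i : ℕ) : ℚ) / n := by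
  rw [freq, ← Icc_add_one_left_eq_Ioc, zero_add, Nat.cast_sum]

theorem sum_Ioc_add_eq_of_forall_eq {M : Type*} [AddCommMonoid M] {f : ℕ → M} {c : M}
    {m l : ℕ} (hf : ∀ i, m < i → i ≤ m + l → f i = c) :
    ∑ i ∈ Ioc 0 (m + l), f i = ∑ i ∈ Ioc 0 m, f i + l • c := by
  rw [← sum_Ioc_consecutive f (Nat.zero_le m) (Nat.le_add_right m l),
    sum_congr rfl fun i hi => hf i (mem_Ioc.1 hi).1 (mem_Ioc.1 hi).2, sum_const,
    Nat.card_Ioc, Nat.add_sub_cancel_left]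

/-- The number of positions preceding block `k`. -/
def blockStart (k : ℕ) : ℕ := 2 ^ (k + 1) - 2

theorem two_le_two_pow_succ (k : ℕ) : 2 ≤ 2 ^ (k + 1) :=
  le_self_pow₀ one_le_two k.succ_ne_zero

theorem blockStart_succ (k : ℕ) : blockStart (k + 1) = blockStart k + 2 ^ k + 2 ^ k := by
  have := two_le_two_pow_succ k
  rw [blockStart, blockStart, pow_succ 2 (k + 1), pow_succ 2 k]
  omega

theorem blockStart_add_pow_le {n k : ℕ} (h : n ≤ k) :
    blockStart n + 2 ^ n ≤ blockStart k + 2 ^ k := by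
  have := two_le_two_pow_succ n
  have := Nat.pow_le_pow_right two_pos h
  rw [blockStart, blockStart, pow_succ, pow_succ]
  omega

theorem blockStart_le {n k : ℕ} (h : n ≤ k) : blockStart n ≤ blockStart k :=
  Nat.sub_le_sub_right (Nat.pow_le_pow_right two_pos (Nat.succ_le_succ h)) 2

def IsBlockEvent (e : ℕ → ℕ) : Prop :=
  ∀ i, 1 ≤ i → (e i = 1 ↔ ∃ n : ℕ, 2 ^ (n + 1) - 1 ≤ i ∧ i ≤ 2 ^ (n + 1) - 2 + 2 ^ n)

namespace IsBlockEvent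

variable {e : ℕ → ℕ} (h : IsBlockEvent e)
include h

theorem eq_one_iff {i : ℕ} (hi : 1 ≤ i) :
    e i = 1 ↔ ∃ k, blockStart k < i ∧ i ≤ blockStart k + 2 ^ k := by
  rw [h i hi]
  refine exists_congr fun k => ?_
  have := two_le_two_pow_succ k
  rw [blockStart]
  omega

theorem eq_one {k i : ℕ} (h₁ : blockStart k < i) (h₂ : i ≤ blockStart k + 2 ^ k) : e i = 1 :=
  (h.eq_one_iff (by omega)).2 ⟨k, h₁, h₂⟩

theorem eq_zero (he : IsPotential e) {k i : ℕ} (h₁ : blockStart k + 2 ^ k < i)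
    (h₂ : i ≤ blockStart (k + 1)) : e i = 0 := by
  have hi : 1 ≤ i := Nat.zero_lt_of_lt h₁
  suffices e i ≠ 1 by have := he i hi; omega
  rintro hone
  obtain ⟨n, hn₁, hn₂⟩ := (h.eq_one_iff hi).1 hone
  rcases le_or_gt n k with hnk | hkn
  · exact absurd (blockStart_add_pow_le hnk) (by omega)
  · exact absurd (blockStart_le (n := k + 1) hkn) (by omega)

theorem two_mul_sum_Ioc_blockStart (he : IsPotential e) (k : ℕ) :
    2 * ∑ i ∈ Ioc 0 (blockStart k), e i = blockStart k := by
  induction k with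
  | zero => simp [blockStart]
  | succ k ih =>
    have hones := sum_Ioc_add_eq_of_forall_eq fun i h₁ h₂ => h.eq_one (k := k) (i := i) h₁ h₂
    have hzeros := sum_Ioc_add_eq_of_forall_eq (m := blockStart k + 2 ^ k) (l := 2 ^ k)
      fun i h₁ h₂ => h.eq_zero he h₁ (by rwa [blockStart_succ])
    rw [blockStart_succ, hzeros, hones]
    simp only [smul_eq_mul, mul_one, mul_zero]
    omega

theorem freq_blockStart_succ (he : IsPotential e) (k : ℕ) :
    freq e (blockStart (k + 1)) = 1 / 2 := by
  have hsum := h.two_mul_sum_Ioc_blockStart he (k + 1)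
  have hpos : ∑ i ∈ Ioc 0 (blockStart (k + 1)), e i ≠ 0 := by
    have := two_le_two_pow_succ (k + 1)
    rw [blockStart] at hsum ⊢
    omega
  rw [freq_eq_sum_Ioc]
  nth_rw 2 [← hsum]
  rw [Nat.cast_mul, Nat.cast_ofNat]
  field_simp

theorem two_thirds_le_freq_blockStart_add_pow (he : IsPotential e) (k : ℕ) :
    2 / 3 ≤ freq e (blockStart k + 2 ^ k) := by
  have hsum := h.two_mul_sum_Ioc_blockStart he k
  have hle : ∑ i ∈ Ioc 0 (blockStart k), e i ≤ 2 ^ k := by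
    have := two_le_two_pow_succ k
    rw [blockStart, pow_succ] at *
    omega
  rw [freq_eq_sum_Ioc, sum_Ioc_add_eq_of_forall_eq fun i h₁ h₂ => h.eq_one h₁ h₂]
  nth_rw 2 [← hsum]
  rw [smul_eq_mul, mul_one, le_div_iff₀ (by positivity)]
  have : ((∑ i ∈ Ioc 0 (blockStart k), e i : ℕ) : ℚ) ≤ 2 ^ k := by exact_mod_cast hle
  push_cast at this ⊢
  linarith

end IsBlockEvent

theorem stmt15 (e : ℕ → ℕ) (he : IsPotential e)
    (hdef : ∀ i, 1 ≤ i →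
      (e i = 1 ↔ ∃ n : ℕ, 2 ^ (n + 1) - 1 ≤ i ∧ i ≤ 2 ^ (n + 1) - 2 + 2 ^ n)) :
    ¬ ∃ γ : ℕ → ℕ, IsActual e γ := by
  rintro ⟨γ, hγ⟩
  have h : IsBlockEvent e := hdef
  set k := γ 7
  have hk : k < 2 ^ k := Nat.lt_two_pow_self
  have hhigh := h.two_thirds_le_freq_blockStart_add_pow he k
  have hlow := h.freq_blockStart_succ he k
  have hclose := hγ.abs_freq_sub_le (n := 7) (a := blockStart k + 2 ^ k) (b := blockStart (k + 1))
    (by norm_num) (by omega) (by rw [blockStart_succ]; omega)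
  rw [hlow] at hclose
  linarith [(abs_le.1 hclose).2]
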